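/- Let φ_0 : [a,b] → ℝ be an arbitrary continuous function and define the Picard iterates φ_n(t) = λ ∫_a^t K(t,η) φ_{n-1}(η) dη + f(t) for n ≥ 1. Then the sequence (φ_n) converges uniformly on [a,b] to the unique continuous solution of the Volterra integral equation φ(t) = λ ∫_a^t K(t,η) φ(η) dη + f(t). -/

import Mathlib

/-!
Let `T` be the Volterra operator `u ↦ λ ∫_a^t K(t,η) u(η) dη + f(t)` on `C([a, b], ℝ)` and let `M`
bound `|K|` on `Ω`. Induction on `n` gives `|Tⁿu(t) - Tⁿv(t)| ≤ ‖u - v‖ (|λ| M (t - a))ⁿ / n!`, so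
`Tⁿ` is Lipschitz with constants `(|λ| M (b - a))ⁿ / n!`, which are summable. For such a map
(Weissinger's fixed point theorem) the iterates `Tⁿu₀` form a Cauchy sequence, their limit is a
fixed point, and any two fixed points coincide since `d(p, q) ≤ Lₙ d(p, q) → 0`. Continuity of `Tu`
is checked after Tietze-extending the data off `Ω` and `[a, b]`, which does not change `T`.
-/

open MeasureTheory intervalIntegral Set Filter

/-- The Picard iterates of the Volterra equation of the second kind:
`φₙ(t) = λ ∫_a^t K(t,η) φ_{n-1}(η) dη + f(t)` for `n ≥ 1`, starting from `φ₀`. -/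
noncomputable def picard (K : ℝ → ℝ → ℝ) (f : ℝ → ℝ) (lam a : ℝ) (φ₀ : ℝ → ℝ) :
    ℕ → ℝ → ℝ
  | 0 => φ₀
  | n + 1 => fun t => lam * (∫ η in a..t, K t η * picard K f lam a φ₀ n η) + f t

open Function Topology
open scoped NNReal

section Weissinger

variable {X : Type*} [MetricSpace X] {f : X → X} {L : ℕ → ℝ≥0}

theorem exists_isFixedPt_tendsto_iterate_of_summable [CompleteSpace X]
    (hf : ∀ n, LipschitzWith (L n) f^[n]) (hL : Summable L) (x : X) :
    ∃ p, IsFixedPt f p ∧ Tendsto (fun n => f^[n] x) atTop (𝓝 p) := by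
  have hstep : ∀ n, dist (f^[n] x) (f^[n + 1] x) ≤ L n * dist x (f x) := fun n => by
    rw [iterate_succ_apply]
    exact (hf n).dist_le_mul x (f x)
  obtain ⟨p, hp⟩ := cauchySeq_tendsto_of_complete
    (cauchySeq_of_dist_le_of_summable _ hstep ((NNReal.summable_coe.2 hL).mul_right _))
  have hfc : Continuous f := by simpa using (hf 1).continuous
  exact ⟨p, isFixedPt_of_tendsto_iterate hp hfc.continuousAt, hp⟩

theorem Function.IsFixedPt.eq_of_lipschitzWith_iterate (hf : ∀ n, LipschitzWith (L n) f^[n])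
    (hL : Tendsto L atTop (𝓝 0)) {p q : X} (hp : IsFixedPt f p) (hq : IsFixedPt f q) :
    p = q := by
  have hlim : Tendsto (fun n => (L n : ℝ) * dist p q) atTop (𝓝 0) := by
    simpa using (NNReal.tendsto_coe.2 hL).mul_const (dist p q)
  refine dist_le_zero.1 (ge_of_tendsto' hlim fun n => ?_)
  calc dist p q = dist (f^[n] p) (f^[n] q) := by rw [(hp.iterate n).eq, (hq.iterate n).eq]
    _ ≤ L n * dist p q := (hf n).dist_le_mul p q

end Weissinger

theorem ContinuousOn.exists_continuous_eqOn {X : Type*} [TopologicalSpace X] [NormalSpace X]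
    {s : Set X} {g : X → ℝ} (hg : ContinuousOn g s) (hs : IsClosed s) :
    ∃ g' : X → ℝ, Continuous g' ∧ EqOn g' g s := by
  obtain ⟨G, hG⟩ := ContinuousMap.exists_restrict_eq hs ⟨s.domRestrict g, hg.domRestrict⟩
  exact ⟨G, G.continuous, fun x hx => congr($hG ⟨x, hx⟩)⟩

theorem integral_sub_pow_div_factorial (a t : ℝ) (n : ℕ) :
    ∫ η in a..t, (η - a) ^ n / n.factorial = (t - a) ^ (n + 1) / (n + 1).factorial := by
  rw [intervalIntegral.integral_div, intervalIntegral.integral_comp_sub_right (· ^ n), sub_self,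
    integral_pow, Nat.factorial_succ]
  push_cast
  field_simp
  ring

def volterraDomain (a b : ℝ) : Set (ℝ × ℝ) := {p | a ≤ p.2 ∧ p.2 ≤ p.1 ∧ p.1 ≤ b}

theorem isClosed_volterraDomain (a b : ℝ) : IsClosed (volterraDomain a b) :=
  (isClosed_le continuous_const continuous_snd).inter
    ((isClosed_le continuous_snd continuous_fst).inter
      (isClosed_le continuous_fst continuous_const))

theorem isCompact_volterraDomain (a b : ℝ) : IsCompact (volterraDomain a b) :=
  (isCompact_Icc.prod isCompact_Icc).of_isClosed_subset (isClosed_volterraDomain a b)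
    fun _ ⟨has, hst, htb⟩ => ⟨⟨has.trans hst, htb⟩, has, hst.trans htb⟩

noncomputable def volterra (K : ℝ → ℝ → ℝ) (f : ℝ → ℝ) (lam a : ℝ) (φ : ℝ → ℝ) (t : ℝ) : ℝ :=
  lam * (∫ η in a..t, K t η * φ η) + f t

section Volterra

variable {a b lam M : ℝ} {K K' : ℝ → ℝ → ℝ} {f f' φ φ' : ℝ → ℝ}

theorem volterra_congr
    (hK : EqOn (fun p : ℝ × ℝ => K p.1 p.2) (fun p => K' p.1 p.2) (volterraDomain a b))
    (hf : EqOn f f' (Icc a b)) (hφ : EqOn φ φ' (Icc a b)) :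
    EqOn (volterra K f lam a φ) (volterra K' f' lam a φ') (Icc a b) := by
  intro t ht
  rw [volterra, volterra, hf ht]
  congr 2
  refine integral_congr fun η hη => ?_
  rw [uIcc_of_le ht.1] at hη
  have hK' : K t η = K' t η := hK (show (t, η) ∈ volterraDomain a b from ⟨hη.1, hη.2, ht.2⟩)
  rw [hK', hφ ⟨hη.1, hη.2.trans ht.2⟩]

theorem continuousOn_volterra
    (hK : ContinuousOn (fun p : ℝ × ℝ => K p.1 p.2) (volterraDomain a b))
    (hf : ContinuousOn f (Icc a b)) (hφ : ContinuousOn φ (Icc a b)) :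
    ContinuousOn (volterra K f lam a φ) (Icc a b) := by
  obtain ⟨K', hK'c, hK'⟩ := hK.exists_continuous_eqOn (isClosed_volterraDomain a b)
  obtain ⟨f', hf'c, hf'⟩ := hf.exists_continuous_eqOn isClosed_Icc
  obtain ⟨φ', hφ'c, hφ'⟩ := hφ.exists_continuous_eqOn isClosed_Icc
  have : Continuous (volterra (fun t s => K' (t, s)) f' lam a φ') := by
    unfold volterra
    fun_prop
  exact this.continuousOn.congr (volterra_congr hK'.symm hf'.symm hφ'.symm)

theorem abs_volterra_sub_le {t : ℝ} {g h c : ℝ → ℝ} (hat : a ≤ t)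
    (hKt : ContinuousOn (K t) (Icc a t)) (hg : ContinuousOn g (Icc a t))
    (hh : ContinuousOn h (Icc a t)) (hc : IntervalIntegrable c volume a t)
    (hM : ∀ η ∈ Icc a t, ‖K t η‖ ≤ M) (hgh : ∀ η ∈ Icc a t, |g η - h η| ≤ c η) :
    |volterra K f lam a g t - volterra K f lam a h t| ≤ |lam| * (M * ∫ η in a..t, c η) := by
  have hM0 : 0 ≤ M := (norm_nonneg _).trans (hM a ⟨le_rfl, hat⟩)
  have hKint : ∀ {φ}, ContinuousOn φ (Icc a t) →
      IntervalIntegrable (fun η => K t η * φ η) volume a t :=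
    fun hφ => (hKt.mul hφ).intervalIntegrable_of_Icc hat
  calc |volterra K f lam a g t - volterra K f lam a h t|
      = |lam| * ‖∫ η in a..t, K t η * (g η - h η)‖ := by
        simp only [volterra, mul_sub, integral_sub (hKint hg) (hKint hh), Real.norm_eq_abs,
          ← abs_mul]
        ring_nf
    _ ≤ |lam| * ∫ η in a..t, M * c η := by
        gcongr
        refine norm_integral_le_of_norm_le hat (ae_of_all _ fun η hη => ?_) (hc.const_mul M)
        rw [norm_mul, Real.norm_eq_abs]
        exact mul_le_mul (hM η (Ioc_subset_Icc_self hη)) (hgh η (Ioc_subset_Icc_self hη))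
          (abs_nonneg _) hM0
    _ = |lam| * (M * ∫ η in a..t, c η) := by rw [intervalIntegral.integral_const_mul]

section Operator

variable (lam) (hab : a ≤ b) (hK : ContinuousOn (fun p : ℝ × ℝ => K p.1 p.2) (volterraDomain a b))
  (hf : ContinuousOn f (Icc a b))

noncomputable def volterraCM (u : C(Icc a b, ℝ)) : C(Icc a b, ℝ) :=
  ⟨(Icc a b).domRestrict (volterra K f lam a (IccExtend hab u)),
    (continuousOn_volterra hK hf
      (continuous_IccExtend_iff.2 u.continuous).continuousOn).domRestrict⟩

theorem isFixedPt_volterraCM (hφ : ContinuousOn φ (Icc a b))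
    (hφeq : EqOn φ (volterra K f lam a φ) (Icc a b)) :
    IsFixedPt (volterraCM lam hab hK hf) ⟨(Icc a b).domRestrict φ, hφ.domRestrict⟩ :=
  ContinuousMap.ext fun t =>
    (volterra_congr (fun _ _ => rfl) (fun _ _ => rfl) (fun _ hs => IccExtend_of_mem _ _ hs)
      t.2).trans (hφeq t.2).symm

theorem dist_iterate_volterraCM_apply_le (hM : ∀ p ∈ volterraDomain a b, ‖K p.1 p.2‖ ≤ M)
    (u v : C(Icc a b, ℝ)) (n : ℕ) (t : Icc a b) :
    dist ((volterraCM lam hab hK hf)^[n] u t) ((volterraCM lam hab hK hf)^[n] v t) ≤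
      dist u v * (|lam| * M) ^ n * (((t : ℝ) - a) ^ n / n.factorial) := by
  induction n generalizing t with
  | zero => simpa using ContinuousMap.dist_apply_le_dist t
  | succ n ih =>
    obtain ⟨t, hat, htb⟩ := t
    have hKt : ContinuousOn (K t) (Icc a t) :=
      hK.comp (continuousOn_const.prodMk continuousOn_id) fun η hη => ⟨hη.1, hη.2, htb⟩
    have hext : ∀ w : C(Icc a b, ℝ), ContinuousOn (IccExtend hab w) (Icc a t) :=
      fun w => (continuous_IccExtend_iff.2 w.continuous).continuousOn
    rw [iterate_succ_apply', iterate_succ_apply', Real.dist_eq]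
    refine (abs_volterra_sub_le hat hKt (hext _) (hext _)
      (c := fun η => dist u v * (|lam| * M) ^ n * ((η - a) ^ n / n.factorial))
      (Continuous.intervalIntegrable (by fun_prop) _ _) (fun η hη => hM (t, η) ⟨hη.1, hη.2, htb⟩)
      fun η hη => ?_).trans_eq ?_
    · have hη' : η ∈ Icc a b := ⟨hη.1, hη.2.trans htb⟩
      rw [IccExtend_of_mem _ _ hη', IccExtend_of_mem _ _ hη', ← Real.dist_eq]
      exact ih ⟨η, hη'⟩
    · rw [intervalIntegral.integral_const_mul, integral_sub_pow_div_factorial]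
      ring

theorem lipschitzWith_iterate_volterraCM (hM : ∀ p ∈ volterraDomain a b, ‖K p.1 p.2‖ ≤ M)
    (n : ℕ) :
    LipschitzWith ((|lam| * M * (b - a)) ^ n / n.factorial).toNNReal
      (volterraCM lam hab hK hf)^[n] := by
  have hM0 : 0 ≤ M := (norm_nonneg _).trans (hM (a, a) ⟨le_rfl, le_rfl, hab⟩)
  refine LipschitzWith.of_dist_le' fun u v =>
    (ContinuousMap.dist_le (by positivity)).2 fun t => ?_
  refine (dist_iterate_volterraCM_apply_le lam hab hK hf hM u v n t).trans ?_
  have hta : ((t : ℝ) - a) ^ n ≤ (b - a) ^ n := by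
    gcongr
    · exact sub_nonneg.2 t.2.1
    · exact t.2.2
  calc dist u v * (|lam| * M) ^ n * (((t : ℝ) - a) ^ n / n.factorial)
      ≤ dist u v * (|lam| * M) ^ n * ((b - a) ^ n / n.factorial) := by gcongr
    _ = (|lam| * M * (b - a)) ^ n / n.factorial * dist u v := by
      rw [mul_pow (|lam| * M)]
      ring

theorem picard_eqOn_iterate_volterraCM {φ₀ : ℝ → ℝ} (hφ₀ : ContinuousOn φ₀ (Icc a b)) (n : ℕ) :
    EqOn (picard K f lam a φ₀ n)
      (IccExtend hab
        ((volterraCM lam hab hK hf)^[n] ⟨(Icc a b).domRestrict φ₀, hφ₀.domRestrict⟩))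
      (Icc a b) := by
  induction n with
  | zero => exact fun t ht => (IccExtend_of_mem hab ((Icc a b).domRestrict φ₀) ht).symm
  | succ n ih =>
    intro t ht
    rw [iterate_succ_apply', IccExtend_of_mem _ _ ht]
    exact volterra_congr (fun _ _ => rfl) (fun _ _ => rfl) ih ht

end Operator

end Volterra

/-- **Convergence of Picard iterates** (continuous case `T = ℝ`): starting from an
arbitrary continuous `φ₀`, the Picard iterates converge uniformly on `[a,b]` to the
unique continuous solution of `φ(t) = λ ∫_a^t K(t,η) φ(η) dη + f(t)`. -/
theorem picard_tendsto_unique_solution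
    (a b : ℝ) (hab : a < b) (K : ℝ → ℝ → ℝ) (f : ℝ → ℝ) (lam : ℝ)
    (hK : ContinuousOn (fun p : ℝ × ℝ => K p.1 p.2)
      {p : ℝ × ℝ | a ≤ p.2 ∧ p.2 ≤ p.1 ∧ p.1 ≤ b})
    (hf : ContinuousOn f (Set.Icc a b))
    (φ₀ : ℝ → ℝ) (hφ₀ : ContinuousOn φ₀ (Set.Icc a b)) :
    ∃ φ : ℝ → ℝ,
      (ContinuousOn φ (Set.Icc a b) ∧
        ∀ t ∈ Set.Icc a b, φ t = lam * (∫ η in a..t, K t η * φ η) + f t) ∧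
      (∀ ψ : ℝ → ℝ, ContinuousOn ψ (Set.Icc a b) →
        (∀ t ∈ Set.Icc a b, ψ t = lam * (∫ η in a..t, K t η * ψ η) + f t) →
        Set.EqOn ψ φ (Set.Icc a b)) ∧
      TendstoUniformlyOn (fun n : ℕ => picard K f lam a φ₀ n) φ atTop (Set.Icc a b) := by
  set T := volterraCM lam hab.le hK hf
  obtain ⟨M, hM⟩ := (isCompact_volterraDomain a b).exists_bound_of_continuousOn hK
  have hT := lipschitzWith_iterate_volterraCM lam hab.le hK hf hM
  have hL := (Real.summable_pow_div_factorial (|lam| * M * (b - a))).toNNReal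
  let u₀ : C(Icc a b, ℝ) := ⟨(Icc a b).domRestrict φ₀, hφ₀.domRestrict⟩
  obtain ⟨p, hp, hlim⟩ := exists_isFixedPt_tendsto_iterate_of_summable hT hL u₀
  refine ⟨IccExtend hab.le p, ⟨(continuous_IccExtend_iff.2 p.continuous).continuousOn,
    fun t ht => ?_⟩, fun ψ hψ hψeq => ?_, ?_⟩
  · rw [IccExtend_of_mem _ _ ht]
    exact congr($hp.symm ⟨t, ht⟩)
  · have hψp := (isFixedPt_volterraCM lam hab.le hK hf hψ hψeq).eq_of_lipschitzWith_iterate hT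
      (NNReal.tendsto_atTop_zero_of_summable hL) hp
    intro t ht
    rw [IccExtend_of_mem _ _ ht, ← hψp]
    rfl
  · have hunif : TendstoUniformlyOn (fun n => IccExtend hab.le (T^[n] u₀)) (IccExtend hab.le p)
        atTop (Icc a b) := by
      simpa [tendstoUniformlyOn_iff_tendstoUniformly_comp_coe, comp_def] using
        ContinuousMap.tendsto_iff_tendstoUniformly.1 hlim
    exact hunif.congr (Eventually.of_forall fun n =>
      (picard_eqOn_iterate_volterraCM lam hab.le hK hf hφ₀ n).symm)
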